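/- For every computably bounded numbering φ, the set MIN_φ is Turing equivalent to the set E = {⟨d,e⟩ : ψ_d = ψ_e}, where ψ is a fixed standard acceptable numbering of the partial recursive functions and ⟨·,·⟩ is a computable pairing function; that is, MIN_φ ≤_T E and E ≤_T MIN_φ. (Since E is Turing equivalent to ∅'', this says MIN_φ ≡_T ∅''.) -/

import Mathlib

/-- A numbering: a family of partial functions `φ_e : ℕ →. ℕ` such that the
two-variable map `(e, x) ↦ φ_e x` is partial recursive. -/
def Numbering' (φ : ℕ → ℕ →. ℕ) : Prop := Partrec₂ φ

/-- `φ` is acceptable: every numbering translates into it via a computable function. -/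
def Acceptable (φ : ℕ → ℕ →. ℕ) : Prop :=
  ∀ ψ : ℕ → ℕ →. ℕ, Numbering' ψ → ∃ f : ℕ → ℕ, Computable f ∧ ∀ e, φ (f e) = ψ e

/-- `φ` has the Kolmogorov property: every numbering translates into it with
linearly bounded (not necessarily computable) translation. -/
def KolmogorovProperty (φ : ℕ → ℕ →. ℕ) : Prop :=
  ∀ ψ : ℕ → ℕ →. ℕ, Numbering' ψ → ∃ c : ℕ, ∀ e, ∃ j, j ≤ c * e + c ∧ φ j = ψ e

/-- `φ` is computably bounded: every numbering translates into it with a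
computable bound on the translated index. -/
def ComputablyBounded (φ : ℕ → ℕ →. ℕ) : Prop :=
  ∀ ψ : ℕ → ℕ →. ℕ, Numbering' ψ → ∃ f : ℕ → ℕ, Computable f ∧ ∀ e, ∃ j, j ≤ f e ∧ φ j = ψ e

/-- `φ` is polynomially bounded with degree `p`. -/
def PolyBounded (φ : ℕ → ℕ →. ℕ) (p : ℕ) : Prop :=
  ∀ ψ : ℕ → ℕ →. ℕ, Numbering' ψ → ∃ c : ℕ, ∀ e, ∃ j, j ≤ c * e ^ p + c ∧ φ j = ψ e

/-- The set of `φ`-minimal indices. -/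
def MINset (φ : ℕ → ℕ →. ℕ) : Set ℕ := {e | ∀ j < e, φ j ≠ φ e}

/-- Minimal indices of functions converging exactly on input 0. -/
def Mset (φ : ℕ → ℕ →. ℕ) : Set ℕ :=
  {e | e ∈ MINset φ ∧ (φ e 0).Dom ∧ ∀ x ≥ 1, ¬ (φ e x).Dom}

/-- `minIndex φ e` is the minimal index computing the same function as `e`. -/
noncomputable def minIndex (φ : ℕ → ℕ →. ℕ) (e : ℕ) : ℕ := sInf {j | φ j = φ e}

/-- A partial recursive `U` is optimal: every partial recursive `V` is simulated
with only linear increase of programs. -/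
def OptimalMachine (U : ℕ →. ℕ) : Prop :=
  Nat.Partrec U ∧ ∀ V : ℕ →. ℕ, Nat.Partrec V →
    ∃ c : ℕ, ∀ p, (V p).Dom → ∃ q, q ≤ c * p + c ∧ U q = V p

/-- Kolmogorov complexity of `x` with respect to `U`: the least binary length of
a `U`-program for `x`. (`Nat.size q` is the binary length of `q`.) -/
noncomputable def Cpx (U : ℕ →. ℕ) (x : ℕ) : ℕ :=
  sInf {n | ∃ q, U q = Part.some x ∧ Nat.size q = n}

/-- Kolmogorov complexity of (the canonical code of) a finite set. -/
noncomputable def CpxFinset (U : ℕ →. ℕ) (A : Finset ℕ) : ℕ :=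
  Cpx U (Encodable.encode A)

/-- `A` is `(m,k)`-recursive: a computable labelling of `k`-tuples that is
correct in at least `m` coordinates on every tuple. -/
def MKRecursive (m k : ℕ) (A : Set ℕ) : Prop :=
  ∃ f : (Fin k → ℕ) → Fin k → Bool, Computable f ∧
    ∀ x : Fin k → ℕ, m ≤ {i : Fin k | (f x i = true ↔ x i ∈ A)}.ncard

/-- Partial recursive relative to an oracle `O : ℕ →. ℕ` (mirrors `Nat.Partrec`
with an extra base case for the oracle). -/
inductive RecursiveIn' (O : ℕ →. ℕ) : (ℕ →. ℕ) → Prop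
  | zero : RecursiveIn' O (pure 0)
  | succ : RecursiveIn' O ↑Nat.succ
  | left : RecursiveIn' O ↑fun n : ℕ => n.unpair.1
  | right : RecursiveIn' O ↑fun n : ℕ => n.unpair.2
  | oracle : RecursiveIn' O O
  | pair {f g} : RecursiveIn' O f → RecursiveIn' O g →
      RecursiveIn' O fun n => Nat.pair <$> f n <*> g n
  | comp {f g} : RecursiveIn' O f → RecursiveIn' O g →
      RecursiveIn' O fun n => g n >>= f
  | prec {f g} : RecursiveIn' O f → RecursiveIn' O g →
      RecursiveIn' O (Nat.unpaired fun a n =>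
        n.rec (f a) fun y IH => do let i ← IH; g (Nat.pair a (Nat.pair y i)))
  | rfind {f} : RecursiveIn' O f →
      RecursiveIn' O fun a => Nat.rfind fun n => (fun m => m = 0) <$> f (Nat.pair a n)

/-- The characteristic function of a set of naturals, as a partial function. -/
noncomputable def chi (A : Set ℕ) : ℕ →. ℕ :=
  fun n => Part.some (A.indicator (fun _ => 1) n)

/-- Turing reducibility between sets of naturals: the characteristic function
of `A` is partial recursive relative to the characteristic function of `B`. -/
noncomputable def TuringLE (A B : Set ℕ) : Prop := RecursiveIn' (chi B) (chi A)

/-- The standard acceptable numbering of the partial recursive functions,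
via Gödel codes. -/
def stdNumbering (e : ℕ) : ℕ →. ℕ := (Denumerable.ofNat Nat.Partrec.Code e).eval

/-- The halting set. -/
def haltingSet : Set ℕ := {e | (stdNumbering e e).Dom}

/-- The index set of equality of partial recursive functions (a set Turing
equivalent to the double jump of the empty set). -/
def eqSet : Set ℕ :=
  {n | stdNumbering n.unpair.1 = stdNumbering n.unpair.2}

/-!
`MIN_φ ≤_T E`: with `g` a computable translation of `φ`-indices into standard ones, `e` is
`φ`-minimal iff no `j < e` has `⟨g j, g e⟩ ∈ E`.

`E ≤_T MIN_φ`: as `φ` is computably bounded, `ψ_d` has a `φ`-index below a computable bound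
`b d`, so its least `φ`-index is the unique element of `MIN_φ` below `b d + 1` that computes
`ψ_d`; and `ψ_d = ψ_e` iff these least indices agree. Inequality of partial recursive functions
is `Σ₁` relative to `K`, so with oracle `K` one waits until every other candidate is seen to
differ from `ψ_d`. Finally `K ≤_T MIN_φ` by the same device, applied to the numbering whose
`m`-th function is defined (with value `0`) at the `s` such that `m` halts within `s` steps:
it is the empty function iff `m ∉ K`. If `m ∉ K`, every candidate other than the least index
of the empty function is eventually seen to converge where it should not; if `m ∈ K`, the least
index of the `m`-th function is never refuted, so the search ends only when `m` halts.
-/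

open Encodable Denumerable Filter
open Nat.Partrec (Code)

theorem chi_eq_cond {A : Set ℕ} {n : ℕ} {b : Bool} (h : b = true ↔ n ∈ A) :
    chi A n = Part.some (bif b then 1 else 0) := by
  cases b <;> simp_all [chi]

noncomputable def charPrefix (A : Set ℕ) (n : ℕ) : List Bool :=
  open Classical in (List.range n).map fun k => decide (k ∈ A)

@[simp]
theorem length_charPrefix (A : Set ℕ) (n : ℕ) : (charPrefix A n).length = n := by
  simp [charPrefix]

theorem charPrefix_getD {A : Set ℕ} {n k : ℕ} (hk : k < n) :
    (charPrefix A n).getD k false = true ↔ k ∈ A := by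
  simp [charPrefix, List.getD_eq_getElem?_getD, List.getElem?_range hk]

theorem charPrefix_succ (A : Set ℕ) (n : ℕ) :
    charPrefix A (n + 1) = charPrefix A n ++ [A.indicator (fun _ => 1) n == 1] := by
  classical
  by_cases h : n ∈ A <;> simp [charPrefix, List.range_succ, h]

namespace RecursiveIn'

variable {O : ℕ →. ℕ}

theorem iff_natRecursiveIn {f : ℕ →. ℕ} : RecursiveIn' O f ↔ Nat.RecursiveIn {O} f := by
  constructor
  · intro h
    induction h with
    | zero => exact .zero
    | succ => exact .succ
    | left => exact .left
    | right => exact .right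
    | oracle => exact .oracle _ rfl
    | pair _ _ ih₁ ih₂ => exact .pair ih₁ ih₂
    | comp _ _ ih₁ ih₂ => exact .comp ih₁ ih₂
    | prec _ _ ih₁ ih₂ => exact .prec ih₁ ih₂
    | rfind _ ih => exact .rfind ih
  · intro h
    induction h with
    | zero => exact .zero
    | succ => exact .succ
    | left => exact .left
    | right => exact .right
    | oracle g hg => exact hg ▸ .oracle
    | pair _ _ ih₁ ih₂ => exact .pair ih₁ ih₂
    | comp _ _ ih₁ ih₂ => exact .comp ih₁ ih₂
    | prec _ _ ih₁ ih₂ => exact .prec ih₁ ih₂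
    | rfind _ ih => exact .rfind ih

theorem of_partrec {f : ℕ →. ℕ} (hf : Nat.Partrec f) : RecursiveIn' O f :=
  iff_natRecursiveIn.2 hf.recursiveIn

theorem trans {O' f : ℕ →. ℕ} (hf : RecursiveIn' O f) (hO : RecursiveIn' O' O) :
    RecursiveIn' O' f :=
  iff_natRecursiveIn.2 <| (iff_natRecursiveIn.1 hf).subst fun _ hg => hg ▸ iff_natRecursiveIn.1 hO

theorem of_eq {f g : ℕ →. ℕ} (hf : RecursiveIn' O f) (H : ∀ n, f n = g n) : RecursiveIn' O g :=
  funext H ▸ hf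

theorem of_computable {f : ℕ → ℕ} (hf : Computable f) : RecursiveIn' O fun n => Part.some (f n) :=
  of_partrec (Partrec.nat_iff.1 hf)

theorem map {f : ℕ →. ℕ} (hf : RecursiveIn' O f) {g : ℕ → ℕ} (hg : Computable g) :
    RecursiveIn' O fun n => (f n).map g :=
  (RecursiveIn'.comp (of_computable hg) hf).of_eq fun n => by simp [Part.bind_some_eq_map]

theorem bind_pair {f g : ℕ →. ℕ} (hf : RecursiveIn' O f) (hg : RecursiveIn' O g) :
    RecursiveIn' O fun n => f n >>= fun b => g (Nat.pair n b) :=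
  (RecursiveIn'.comp hg (.pair (of_computable Computable.id) hf)).of_eq fun n => by
    simp only [Seq.seq, id_eq, Part.map_eq_map, Part.map_some, Part.bind_some, Part.bind_eq_bind]
    rfl

theorem comp_computable {f : ℕ →. ℕ} (hf : RecursiveIn' O f) {g : ℕ → ℕ} (hg : Computable g) :
    RecursiveIn' O fun n => f (g n) :=
  (RecursiveIn'.comp hf (of_computable hg)).of_eq fun _ => Part.bind_some _ _

theorem encode_charPrefix (A : Set ℕ) :
    RecursiveIn' (chi A) fun n => Part.some (encode (charPrefix A n)) := by
  -- `extend ⟨⟨a, ⟨y, encode (A ↾ y)⟩⟩, χ_A y⟩ = encode (A ↾ (y + 1))`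
  let extend : ℕ → ℕ := fun m =>
    encode ((decode (α := List Bool) m.unpair.1.unpair.2.unpair.2).getD [] ++ [m.unpair.2 == 1])
  have hextend : Computable extend :=
    (Primrec.encode.comp <| Primrec.list_concat.comp
      (Primrec.option_getD.comp (Primrec.decode.comp <| Primrec.snd.comp <| Primrec.unpair.comp <|
        Primrec.snd.comp <| Primrec.unpair.comp <| Primrec.fst.comp Primrec.unpair) (.const []))
      (Primrec.beq.comp (Primrec.snd.comp Primrec.unpair) (.const 1))).to_comp
  have hstep : RecursiveIn' (chi A) fun m =>
      chi A m.unpair.2.unpair.1 >>= fun b => Part.some (extend (Nat.pair m b)) :=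
    bind_pair (comp_computable .oracle
      (Computable.fst.comp <| Computable.unpair.comp <| Computable.snd.comp Computable.unpair))
      (of_computable hextend)
  have hrec := RecursiveIn'.prec (of_computable (Computable.const (encode ([] : List Bool)))) hstep
  have hpair : Computable (Nat.pair 0) :=
    Primrec₂.natPair.to_comp.comp (Computable.const 0) Computable.id
  refine (RecursiveIn'.comp hrec (of_computable hpair)).of_eq fun n => ?_
  simp only [Part.bind_eq_bind, Part.bind_some, Nat.unpaired, Nat.unpair_pair]
  induction n with
  | zero => rfl
  | succ n ih =>
    change Part.bind (Nat.rec _ _ n) _ = _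
    rw [ih]
    simp [chi, extend, encodek, charPrefix_succ]

theorem comp_charPrefix {A : Set ℕ} (hA : RecursiveIn' O (chi A)) {u : ℕ →. ℕ}
    (hu : RecursiveIn' O u) {h : ℕ → ℕ} (hh : Computable h) :
    RecursiveIn' O fun n => u (Nat.pair n (encode (charPrefix A (h n)))) :=
  (bind_pair (comp_computable ((encode_charPrefix A).trans hA) hh) hu).of_eq fun _ =>
    Part.bind_some _ _

theorem of_charPrefix {A : Set ℕ} (hA : RecursiveIn' O (chi A)) {u : ℕ → List Bool →. ℕ}
    (hu : Partrec₂ u) {h : ℕ → ℕ} (hh : Computable h) :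
    RecursiveIn' O fun n => u n (charPrefix A (h n)) := by
  have hdecode : Computable fun m : ℕ => (decode (α := List Bool) m).getD [] :=
    Primrec.to_comp <| Primrec.option_getD.comp Primrec.decode (.const [])
  have hu' : Nat.Partrec fun m => u m.unpair.1 ((decode (α := List Bool) m.unpair.2).getD []) :=
    Partrec.nat_iff.1 <| hu.comp (Computable.fst.comp Computable.unpair)
      (hdecode.comp <| Computable.snd.comp Computable.unpair)
  exact (comp_charPrefix hA (of_partrec hu') hh).of_eq fun n => by simp [encodek]

theorem rfind_charPrefix {A : Set ℕ} (hA : RecursiveIn' O (chi A)) {p : ℕ → List Bool → Bool}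
    (hp : Computable₂ p) {h : ℕ → ℕ} (hh : Computable h) :
    RecursiveIn' O fun a =>
      Nat.rfind fun n => Part.some (p (Nat.pair a n) (charPrefix A (h (Nat.pair a n)))) := by
  have hq : Computable₂ fun m σ => bif p m σ then 0 else 1 :=
    Computable.cond hp (.const 0) (.const 1)
  refine (RecursiveIn'.rfind (of_charPrefix hA hq.partrec₂ hh)).of_eq fun a => ?_
  congr 1
  funext n
  cases hpn : p (Nat.pair a n) (charPrefix A (h (Nat.pair a n))) <;> simp [hpn]

end RecursiveIn'

theorem Nat.rfind_map_eq_some {p : ℕ → Bool} {g : ℕ → ℕ} {y : ℕ} (hp : ∃ n, p n = true)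
    (hg : ∀ n, p n = true → g n = y) :
    (Nat.rfind fun n => Part.some (p n)).map g = Part.some y := by
  obtain ⟨m, hm⟩ := hp
  obtain ⟨n, hn, -⟩ := Nat.rfind_min' hm
  rw [Part.eq_some_iff, ← hg n (Part.mem_some_iff.1 (Nat.rfind_spec hn)).symm]
  exact Part.mem_map g hn

section MinimalIndices

variable {φ : ℕ → ℕ →. ℕ}

theorem minIndex_spec (φ : ℕ → ℕ →. ℕ) (e : ℕ) : φ (minIndex φ e) = φ e :=
  Nat.sInf_mem (s := {j | φ j = φ e}) ⟨e, rfl⟩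

theorem minIndex_le (φ : ℕ → ℕ →. ℕ) (e : ℕ) : minIndex φ e ≤ e :=
  Nat.sInf_le rfl

theorem minIndex_mem_MINset (φ : ℕ → ℕ →. ℕ) (e : ℕ) : minIndex φ e ∈ MINset φ :=
  fun _ hj hφj => Nat.notMem_of_lt_sInf hj (hφj.trans (minIndex_spec φ e))

theorem eq_of_mem_MINset {i j : ℕ} (hi : i ∈ MINset φ) (hj : j ∈ MINset φ) (h : φ i = φ j) :
    i = j := by
  rcases lt_trichotomy i j with hij | rfl | hji
  · exact absurd h (hj i hij)
  · rfl
  · exact absurd h.symm (hi j hji)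

theorem eq_minIndex_of_mem_MINset {j e : ℕ} (hj : j ∈ MINset φ) (h : φ j = φ e) :
    j = minIndex φ e :=
  eq_of_mem_MINset hj (minIndex_mem_MINset φ e) (h.trans (minIndex_spec φ e).symm)

theorem minIndex_eq_minIndex_iff {i j : ℕ} : minIndex φ i = minIndex φ j ↔ φ i = φ j :=
  ⟨fun h => by rw [← minIndex_spec φ i, h, minIndex_spec φ j],
    fun h => (eq_minIndex_of_mem_MINset (minIndex_mem_MINset φ i) ((minIndex_spec φ i).trans h))⟩

end MinimalIndices

theorem Primrec.list_all {α β : Type*} [Primcodable α] [Primcodable β] {f : α → List β}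
    {p : α → β → Bool} (hf : Primrec f) (hp : Primrec₂ p) : Primrec fun a => (f a).all (p a) := by
  have hfold : ∀ l : List β, ∀ a, l.all (p a) = l.foldr (fun b acc => p a b && acc) true := by
    intro l a; induction l <;> simp_all
  simp only [hfold]
  exact Primrec.list_foldr hf (.const true) (Primrec.and.comp (hp.comp Primrec.fst
    (Primrec.fst.comp Primrec.snd)) (Primrec.snd.comp Primrec.snd)).to₂

theorem Primrec.list_any {α β : Type*} [Primcodable α] [Primcodable β] {f : α → List β}
    {p : α → β → Bool} (hf : Primrec f) (hp : Primrec₂ p) : Primrec fun a => (f a).any (p a) := by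
  have hdual : ∀ l : List β, ∀ a, l.any (p a) = !l.all fun b => !p a b := by
    intro l a; induction l <;> simp_all
  simp only [hdual]
  exact Primrec.not.comp (Primrec.list_all hf (Primrec.not.comp hp).to₂)

def allMarked (σ : List Bool) (p : ℕ → Bool) : Bool :=
  (List.range σ.length).all fun i => !σ.getD i false || p i

theorem allMarked_charPrefix {A : Set ℕ} {n : ℕ} {p : ℕ → Bool} :
    allMarked (charPrefix A n) p = true ↔ ∀ i < n, i ∈ A → p i = true := by
  simp only [allMarked, List.all_eq_true, List.mem_range, length_charPrefix, Bool.or_eq_true,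
    Bool.not_eq_true']
  refine forall₂_congr fun i hi => ?_
  rw [← charPrefix_getD hi (A := A)]
  cases (charPrefix A n).getD i false <;> simp

theorem exists_allMarked_charPrefix {A : Set ℕ} {n : ℕ} {p : ℕ → ℕ → Bool}
    (h : ∀ i < n, i ∈ A → ∀ᶠ s in atTop, p s i = true) :
    ∃ s, allMarked (charPrefix A n) (p s) = true := by
  have hall : ∀ i ∈ Finset.range n, ∀ᶠ s in atTop, i ∈ A → p s i = true := fun i hi => by
    by_cases hiA : i ∈ A
    · exact (h i (Finset.mem_range.1 hi) hiA).mono fun _ hs _ => hs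
    · exact .of_forall fun _ hiA' => absurd hiA' hiA
  obtain ⟨s, hs⟩ := ((eventually_all_finset _).2 hall).exists
  exact ⟨s, allMarked_charPrefix.2 fun i hi hiA => hs i (Finset.mem_range.2 hi) hiA⟩

theorem Primrec.allMarked {α : Type*} [Primcodable α] {σ : α → List Bool} {p : α → ℕ → Bool}
    (hσ : Primrec σ) (hp : Primrec₂ p) : Primrec fun a => _root_.allMarked (σ a) (p a) :=
  Primrec.list_all (Primrec.list_range.comp (Primrec.list_length.comp hσ))
    (Primrec.or.comp (Primrec.not.comp ((Primrec.list_getD false).comp (hσ.comp Primrec.fst)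
      Primrec.snd)) hp).to₂

def stdStage (s x n : ℕ) : Option ℕ := Code.evaln s (ofNat Code x) n

theorem stdStage_mono {s t x n v : ℕ} (hst : s ≤ t) (h : v ∈ stdStage s x n) :
    v ∈ stdStage t x n :=
  Code.evaln_mono hst h

theorem lt_of_mem_stdStage {s x n v : ℕ} (h : v ∈ stdStage s x n) : n < s :=
  Code.evaln_bound h

theorem mem_stdNumbering_iff {x n v : ℕ} : v ∈ stdNumbering x n ↔ ∃ s, v ∈ stdStage s x n :=
  Code.evaln_complete

theorem eventually_mem_stdStage {x n v : ℕ} (h : v ∈ stdNumbering x n) :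
    ∀ᶠ s in atTop, v ∈ stdStage s x n := by
  obtain ⟨s, hs⟩ := mem_stdNumbering_iff.1 h
  exact eventually_atTop.2 ⟨s, fun _ hst => stdStage_mono hst hs⟩

theorem Primrec.stdStage {α : Type*} [Primcodable α] {s x n : α → ℕ} (hs : Primrec s)
    (hx : Primrec x) (hn : Primrec n) : Primrec fun a => _root_.stdStage (s a) (x a) (n a) :=
  Code.primrec_evaln.comp ((hs.pair ((Primrec.ofNat Code).comp hx)).pair hn)

theorem Numbering'.exists_primrec_translation {φ : ℕ → ℕ →. ℕ} (hφ : Numbering' φ) :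
    ∃ g : ℕ → ℕ, Primrec g ∧ ∀ j, stdNumbering (g j) = φ j := by
  obtain ⟨c, hc⟩ := Code.exists_code.1 <| Partrec.nat_iff.1 <|
    (hφ : Partrec₂ φ).comp (Computable.fst.comp Computable.unpair)
      (Computable.snd.comp Computable.unpair)
  refine ⟨fun j => encode (c.curry j), Primrec.encode.comp <|
    Code.primrec₂_curry.comp (.const c) Primrec.id, fun j => funext fun n => ?_⟩
  simp [stdNumbering, Code.eval_curry, hc]

theorem numbering_stdNumbering : Numbering' stdNumbering :=
  Code.eval_part.comp ((Computable.ofNat Code).comp Computable.fst) Computable.snd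

theorem pair_mem_eqSet {d e : ℕ} : Nat.pair d e ∈ eqSet ↔ stdNumbering d = stdNumbering e := by
  simp [eqSet]

theorem MINset_turingLE_eqSet {φ : ℕ → ℕ →. ℕ} (hφ : Numbering' φ) : TuringLE (MINset φ) eqSet := by
  obtain ⟨g, hg, hgφ⟩ := hφ.exists_primrec_translation
  let query : ℕ → ℕ → ℕ := fun e j => Nat.pair (g j) (g e)
  have hquery : Primrec₂ query := Primrec₂.natPair.comp (hg.comp Primrec.snd) (hg.comp Primrec.fst)
  let bound : ℕ → ℕ := fun e => ((List.range e).map (query e)).sum + 1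
  have hbound : Primrec bound := by
    refine Primrec.succ.comp ?_
    have := Primrec.list_foldr (Primrec.list_map Primrec.list_range hquery) (.const 0)
      (Primrec.nat_add.comp (Primrec.fst.comp Primrec.snd) (Primrec.snd.comp Primrec.snd)).to₂
    simpa [List.sum] using this
  have hlt : ∀ {e j}, j < e → query e j < bound e := fun hj =>
    Nat.lt_succ_of_le <| List.le_sum_of_mem <| List.mem_map.2 ⟨_, List.mem_range.2 hj, rfl⟩
  let decideMin : ℕ → List Bool → ℕ := fun e σ =>
    bif (List.range e).all fun j => !σ.getD (query e j) false then 1 else 0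
  have hdecide : Computable₂ decideMin :=
    (Primrec.cond (Primrec.list_all (Primrec.list_range.comp Primrec.fst)
      (Primrec.not.comp ((Primrec.list_getD false).comp (Primrec.snd.comp Primrec.fst)
        (hquery.comp (Primrec.fst.comp Primrec.fst) Primrec.snd))).to₂)
      (.const 1) (.const 0)).to_comp
  refine (RecursiveIn'.of_charPrefix .oracle hdecide.partrec₂ hbound.to_comp).of_eq fun e =>
    (chi_eq_cond ?_).symm
  simp only [List.all_eq_true, List.mem_range, Bool.not_eq_true']
  refine forall₂_congr fun j hj => ?_
  rw [← Bool.not_eq_true, charPrefix_getD (hlt hj), pair_mem_eqSet, hgφ, hgφ]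

def haltingPairs : Set ℕ := {m | (stdNumbering m.unpair.1 m.unpair.2).Dom}

def haltsWithin (s m : ℕ) : Bool := (stdStage s m.unpair.1 m.unpair.2).isSome

theorem mem_haltingPairs_iff {m : ℕ} : m ∈ haltingPairs ↔ ∃ s, haltsWithin s m = true := by
  simp only [haltingPairs, Part.dom_iff_mem, mem_stdNumbering_iff, Option.mem_def,
    Set.mem_ofPred_eq, haltsWithin, Option.isSome_iff_exists]
  exact exists_comm

theorem pair_mem_haltingPairs {x n : ℕ} :
    Nat.pair x n ∈ haltingPairs ↔ (stdNumbering x n).Dom := by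
  simp [haltingPairs]

theorem Primrec.haltsWithin : Primrec₂ _root_.haltsWithin :=
  Primrec.option_isSome.comp <| Primrec.stdStage Primrec.fst
    (Primrec.fst.comp <| Primrec.unpair.comp Primrec.snd)
    (Primrec.snd.comp <| Primrec.unpair.comp Primrec.snd)

def haltingWitness (m s : ℕ) : Part ℕ := bif haltsWithin s m then Part.some 0 else Part.none

theorem numbering_haltingWitness : Numbering' haltingWitness :=
  Partrec.cond (Primrec.haltsWithin.comp Primrec.snd Primrec.fst).to_comp
    (Partrec.const' (Part.some 0)) Partrec.none

theorem haltingWitness_eq_none {m : ℕ} (hm : m ∉ haltingPairs) :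
    haltingWitness m = fun _ => Part.none := by
  funext s
  have : haltsWithin s m = false := by
    by_contra h
    exact hm (mem_haltingPairs_iff.2 ⟨s, by simpa using h⟩)
  simp [haltingWitness, this]

theorem haltingWitness_ne_none {m : ℕ} (hm : m ∈ haltingPairs) :
    haltingWitness m ≠ fun _ => Part.none := by
  obtain ⟨s, hs⟩ := mem_haltingPairs_iff.1 hm
  intro h
  have := congrFun h s
  simp [haltingWitness, hs] at this

def refutedWithin (s m y : ℕ) : Bool :=
  (List.range s).any fun n => (stdStage s y n).isSome && !haltsWithin n m

theorem stdNumbering_ne_of_refutedWithin {s m y : ℕ} (h : refutedWithin s m y = true) :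
    stdNumbering y ≠ haltingWitness m := by
  intro hy
  obtain ⟨n, -, hn⟩ := List.any_eq_true.1 h
  simp only [Bool.and_eq_true, Bool.not_eq_true', Option.isSome_iff_exists] at hn
  obtain ⟨⟨v, hv⟩, hm⟩ := hn
  have hdom : (haltingWitness m n).Dom :=
    hy ▸ Part.dom_iff_mem.2 ⟨v, mem_stdNumbering_iff.2 ⟨s, hv⟩⟩
  simp [haltingWitness, hm] at hdom

theorem eventually_refutedWithin {m y : ℕ} (hm : m ∉ haltingPairs)
    (hy : stdNumbering y ≠ fun _ => Part.none) : ∀ᶠ s in atTop, refutedWithin s m y = true := by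
  obtain ⟨n, hn⟩ : ∃ n, (stdNumbering y n).Dom := by
    by_contra! h
    exact hy (funext fun n => Part.eq_none_iff'.2 (h n))
  have hnm : haltsWithin n m = false := by
    by_contra h
    exact hm (mem_haltingPairs_iff.2 ⟨n, by simpa using h⟩)
  filter_upwards [eventually_mem_stdStage (Part.get_mem hn)] with s hs
  exact List.any_eq_true.2 ⟨n, List.mem_range.2 (lt_of_mem_stdStage hs),
    by simp [hnm, Option.isSome_iff_exists.2 ⟨_, hs⟩]⟩

theorem Primrec.refutedWithin {α : Type*} [Primcodable α] {s m y : α → ℕ} (hs : Primrec s)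
    (hm : Primrec m) (hy : Primrec y) : Primrec fun a => _root_.refutedWithin (s a) (m a) (y a) :=
  Primrec.list_any (Primrec.list_range.comp hs) <| Primrec.and.comp
    (Primrec.option_isSome.comp (Primrec.stdStage (hs.comp Primrec.fst) (hy.comp Primrec.fst)
      Primrec.snd))
    (Primrec.not.comp (Primrec.haltsWithin.comp Primrec.snd (hm.comp Primrec.fst)))

def haltSearchStop (g : ℕ → ℕ) (n₀ m : ℕ) (σ : List Bool) (s : ℕ) : Bool :=
  haltsWithin s m || allMarked σ fun i => i == n₀ || refutedWithin s m (g i)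

section HaltSearch

variable {φ : ℕ → ℕ →. ℕ} {g : ℕ → ℕ} {n₀ m b : ℕ}

theorem haltsWithin_iff_of_haltSearchStop (hgφ : ∀ j, stdNumbering (g j) = φ j)
    (hn₀ : φ n₀ = fun _ => Part.none) (hb : ∃ j ≤ b, φ j = haltingWitness m) {s : ℕ}
    (hs : haltSearchStop g n₀ m (charPrefix (MINset φ) (b + 1)) s = true) :
    haltsWithin s m = true ↔ m ∈ haltingPairs := by
  refine ⟨fun h => mem_haltingPairs_iff.2 ⟨s, h⟩, fun hm => ?_⟩
  by_contra hsm
  obtain ⟨j, hjb, hj⟩ := hb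
  have hμ : φ (minIndex φ j) = haltingWitness m := (minIndex_spec φ j).trans hj
  have hrefuted := allMarked_charPrefix.1 (by simpa [haltSearchStop, hsm] using hs) (minIndex φ j)
    (Nat.lt_succ_of_le ((minIndex_le φ j).trans hjb)) (minIndex_mem_MINset φ j)
  have hμn₀ : minIndex φ j ≠ n₀ := fun h =>
    haltingWitness_ne_none hm (hμ.symm.trans (h ▸ hn₀))
  simp only [Bool.or_eq_true, beq_iff_eq, hμn₀, false_or] at hrefuted
  exact stdNumbering_ne_of_refutedWithin hrefuted ((hgφ _).trans hμ)

theorem exists_haltSearchStop (hgφ : ∀ j, stdNumbering (g j) = φ j)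
    (hn₀ : φ n₀ = fun _ => Part.none) (hn₀min : n₀ ∈ MINset φ) :
    ∃ s, haltSearchStop g n₀ m (charPrefix (MINset φ) (b + 1)) s = true := by
  by_cases hm : m ∈ haltingPairs
  · obtain ⟨s, hs⟩ := mem_haltingPairs_iff.1 hm
    exact ⟨s, by simp [haltSearchStop, hs]⟩
  suffices h : ∃ s, allMarked (charPrefix (MINset φ) (b + 1))
      (fun i => i == n₀ || refutedWithin s m (g i)) = true from
    h.imp fun s hs => by simp [haltSearchStop, hs]
  refine exists_allMarked_charPrefix fun i _ hi => ?_
  by_cases hin₀ : i = n₀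
  · exact .of_forall fun _ => by simp [hin₀]
  have hφi : stdNumbering (g i) ≠ fun _ => Part.none := fun h =>
    hin₀ (eq_of_mem_MINset hi hn₀min (((hgφ i).symm.trans h).trans hn₀.symm))
  filter_upwards [eventually_refutedWithin hm hφi] with s hs
  simp [hs]

end HaltSearch

theorem Primrec.haltSearchStop {g : ℕ → ℕ} (hg : Primrec g) (n₀ : ℕ) :
    Primrec₂ fun (a : ℕ × List Bool) (s : ℕ) => _root_.haltSearchStop g n₀ a.1 a.2 s :=
  Primrec.or.comp (Primrec.haltsWithin.comp Primrec.snd (Primrec.fst.comp Primrec.fst)) <|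
    Primrec.allMarked (Primrec.snd.comp Primrec.fst) <| Primrec.or.comp
      (Primrec.beq.comp Primrec.snd (.const n₀))
      (Primrec.refutedWithin (Primrec.snd.comp Primrec.fst)
        (Primrec.fst.comp (Primrec.fst.comp Primrec.fst)) (hg.comp Primrec.snd))

theorem haltingPairs_turingLE_MINset {φ : ℕ → ℕ →. ℕ} (hφ : Numbering' φ)
    (hcb : ComputablyBounded φ) : TuringLE haltingPairs (MINset φ) := by
  obtain ⟨g, hg, hgφ⟩ := hφ.exists_primrec_translation
  obtain ⟨b, hb, hbψ⟩ := hcb _ numbering_haltingWitness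
  obtain ⟨_, -, hnone⟩ := hcb (fun _ _ => Part.none) Partrec.none
  obtain ⟨z, -, hz⟩ := hnone 0
  let search : ℕ → List Bool →. ℕ := fun m σ =>
    (Nat.rfind fun s => Part.some (haltSearchStop g (minIndex φ z) m σ s)).map
      fun s => bif haltsWithin s m then 1 else 0
  have hsearch : Partrec₂ search :=
    (Partrec.rfind (Primrec.haltSearchStop hg _).to_comp.partrec₂).map
      (Primrec.cond (Primrec.haltsWithin.comp Primrec.snd (Primrec.fst.comp Primrec.fst))
        (.const 1) (.const 0)).to_comp.to₂
  refine (RecursiveIn'.of_charPrefix .oracle hsearch (Computable.succ.comp hb)).of_eq fun m => ?_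
  have hn₀ : φ (minIndex φ z) = fun _ => Part.none := (minIndex_spec φ z).trans hz
  obtain ⟨s, hs⟩ := exists_haltSearchStop (m := m) (b := b m) hgφ hn₀ (minIndex_mem_MINset φ z)
  rw [chi_eq_cond (haltsWithin_iff_of_haltSearchStop hgφ hn₀ (hbψ m) hs)]
  refine Nat.rfind_map_eq_some ⟨s, hs⟩ fun t ht => ?_
  rw [Bool.eq_iff_iff.2 ((haltsWithin_iff_of_haltSearchStop hgφ hn₀ (hbψ m) ht).trans
    (haltsWithin_iff_of_haltSearchStop hgφ hn₀ (hbψ m) hs).symm)]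

/-- `κ` stands for the initial segment `K ↾ s`, read only below `s`. -/
def disagreeAt (κ : List Bool) (s x y n : ℕ) : Bool :=
  (decide (max (Nat.pair x n) (Nat.pair y n) < s) &&
      !(κ.getD (Nat.pair x n) false == κ.getD (Nat.pair y n) false)) ||
    ((stdStage s x n).isSome && (stdStage s y n).isSome &&
      !decide (stdStage s x n = stdStage s y n))

def differsWithin (κ : List Bool) (s x y : ℕ) : Bool := (List.range s).any (disagreeAt κ s x y)

theorem stdNumbering_ne_of_disagreeAt {s x y n : ℕ}
    (h : disagreeAt (charPrefix haltingPairs s) s x y n = true) :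
    stdNumbering x n ≠ stdNumbering y n := by
  intro hxy
  simp only [disagreeAt, Bool.or_eq_true, Bool.and_eq_true, decide_eq_true_eq, max_lt_iff,
    Bool.not_eq_true', beq_eq_false_iff_ne, Option.isSome_iff_exists] at h
  rcases h with ⟨⟨hx, hy⟩, hbits⟩ | ⟨⟨⟨a, ha⟩, ⟨b, hb⟩⟩, hab⟩
  · refine hbits (Bool.eq_iff_iff.2 ?_)
    rw [charPrefix_getD hx, charPrefix_getD hy, pair_mem_haltingPairs, pair_mem_haltingPairs, hxy]
  · have : a = b := Part.mem_unique (hxy ▸ mem_stdNumbering_iff.2 ⟨s, ha⟩)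
      (mem_stdNumbering_iff.2 ⟨s, hb⟩)
    simp [ha, hb, this] at hab

theorem eventually_disagreeAt {x y n : ℕ} (h : stdNumbering x n ≠ stdNumbering y n) :
    ∀ᶠ s in atTop, disagreeAt (charPrefix haltingPairs s) s x y n = true := by
  by_cases hdom : (stdNumbering x n).Dom ↔ (stdNumbering y n).Dom
  · have hx : (stdNumbering x n).Dom := by
      by_contra hx
      exact h ((Part.eq_none_iff'.2 hx).trans (Part.eq_none_iff'.2 (mt hdom.2 hx)).symm)
    have hy := hdom.1 hx
    have hne : (stdNumbering x n).get hx ≠ (stdNumbering y n).get hy := fun hv =>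
      h (Part.ext' hdom fun _ _ => hv)
    filter_upwards [eventually_mem_stdStage (Part.get_mem hx),
      eventually_mem_stdStage (Part.get_mem hy)] with s hsx hsy
    simp [disagreeAt, Option.mem_def.1 hsx, Option.mem_def.1 hsy, hne]
  · filter_upwards [eventually_gt_atTop (max (Nat.pair x n) (Nat.pair y n))] with s hs
    have hx : Nat.pair x n < s := (le_max_left _ _).trans_lt hs
    have hy : Nat.pair y n < s := (le_max_right _ _).trans_lt hs
    have hbits : (charPrefix haltingPairs s).getD (Nat.pair x n) false ≠
        (charPrefix haltingPairs s).getD (Nat.pair y n) false := fun hb => hdom <| by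
      rw [← pair_mem_haltingPairs, ← pair_mem_haltingPairs, ← charPrefix_getD hx,
        ← charPrefix_getD hy, hb]
    rw [disagreeAt, Bool.or_eq_true]
    exact Or.inl (by simpa [hs] using hbits)

theorem stdNumbering_ne_of_differsWithin {s x y : ℕ}
    (h : differsWithin (charPrefix haltingPairs s) s x y = true) :
    stdNumbering x ≠ stdNumbering y := fun hxy => by
  obtain ⟨n, -, hn⟩ := List.any_eq_true.1 h
  exact stdNumbering_ne_of_disagreeAt hn (congrFun hxy n)

theorem eventually_differsWithin {x y : ℕ} (h : stdNumbering x ≠ stdNumbering y) :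
    ∀ᶠ s in atTop, differsWithin (charPrefix haltingPairs s) s x y = true := by
  obtain ⟨n, hn⟩ := Function.ne_iff.1 h
  filter_upwards [eventually_disagreeAt hn, eventually_gt_atTop n] with s hs hns
  exact List.any_eq_true.2 ⟨n, List.mem_range.2 hns, hs⟩

theorem Primrec.differsWithin {α : Type*} [Primcodable α] {κ : α → List Bool} {s x y : α → ℕ}
    (hκ : Primrec κ) (hs : Primrec s) (hx : Primrec x) (hy : Primrec y) :
    Primrec fun a => _root_.differsWithin (κ a) (s a) (x a) (y a) := by
  have hpx : Primrec fun p : α × ℕ => Nat.pair (x p.1) p.2 :=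
    Primrec₂.natPair.comp (hx.comp Primrec.fst) Primrec.snd
  have hpy : Primrec fun p : α × ℕ => Nat.pair (y p.1) p.2 :=
    Primrec₂.natPair.comp (hy.comp Primrec.fst) Primrec.snd
  have hsx := Primrec.stdStage (hs.comp Primrec.fst) (hx.comp Primrec.fst) Primrec.snd
  have hsy := Primrec.stdStage (hs.comp Primrec.fst) (hy.comp Primrec.fst) Primrec.snd
  have hbit : ∀ {q : α × ℕ → ℕ}, Primrec q → Primrec fun p => (κ p.1).getD (q p) false :=
    fun hq => (Primrec.list_getD false).comp (hκ.comp Primrec.fst) hq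
  exact Primrec.list_any (Primrec.list_range.comp hs) <| Primrec.or.comp
    (Primrec.and.comp
      (Primrec.nat_lt.decide.comp (Primrec.nat_max.comp hpx hpy) (hs.comp Primrec.fst))
      (Primrec.not.comp (Primrec.beq.comp (hbit hpx) (hbit hpy))))
    (Primrec.and.comp (Primrec.and.comp (Primrec.option_isSome.comp hsx)
      (Primrec.option_isSome.comp hsy)) (Primrec.not.comp (Primrec.eq.decide.comp hsx hsy)))

def soleSurvivor (g : ℕ → ℕ) (d : ℕ) (σ κ : List Bool) (s j : ℕ) : Bool :=
  allMarked σ fun i => i == j || differsWithin κ s (g i) d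

section SoleSurvivor

variable {φ : ℕ → ℕ →. ℕ} {g : ℕ → ℕ} {d t b : ℕ}

theorem eq_minIndex_of_soleSurvivor (hgφ : ∀ j, stdNumbering (g j) = φ j)
    (ht : φ t = stdNumbering d) (htb : t ≤ b) {s j : ℕ}
    (h : soleSurvivor g d (charPrefix (MINset φ) (b + 1)) (charPrefix haltingPairs s) s j = true) :
    j = minIndex φ t := by
  have hsurvives := allMarked_charPrefix.1 h (minIndex φ t)
    (Nat.lt_succ_of_le ((minIndex_le φ t).trans htb)) (minIndex_mem_MINset φ t)
  simp only [Bool.or_eq_true, beq_iff_eq] at hsurvives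
  refine (hsurvives.resolve_right fun hdiff => stdNumbering_ne_of_differsWithin hdiff ?_).symm
  rw [hgφ, minIndex_spec φ t, ht]

theorem exists_soleSurvivor (hgφ : ∀ j, stdNumbering (g j) = φ j)
    (ht : φ t = stdNumbering d) :
    ∃ s, soleSurvivor g d (charPrefix (MINset φ) (b + 1)) (charPrefix haltingPairs s) s
      (minIndex φ t) = true := by
  refine exists_allMarked_charPrefix fun i _ hi => ?_
  by_cases hit : i = minIndex φ t
  · exact .of_forall fun _ => by simp [hit]
  have hne : stdNumbering (g i) ≠ stdNumbering d := fun h =>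
    hit (eq_minIndex_of_mem_MINset hi (((hgφ i).symm.trans h).trans ht.symm))
  filter_upwards [eventually_differsWithin hne] with s hs
  simp [hs]

end SoleSurvivor

theorem Primrec.soleSurvivor {α : Type*} [Primcodable α] {g : ℕ → ℕ} (hg : Primrec g)
    {d s j : α → ℕ} {σ κ : α → List Bool} (hd : Primrec d) (hσ : Primrec σ) (hκ : Primrec κ)
    (hs : Primrec s) (hj : Primrec j) :
    Primrec fun a => _root_.soleSurvivor g (d a) (σ a) (κ a) (s a) (j a) :=
  Primrec.allMarked hσ <| Primrec.or.comp (Primrec.beq.comp Primrec.snd (hj.comp Primrec.fst)) <|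
    Primrec.differsWithin (hκ.comp Primrec.fst) (hs.comp Primrec.fst) (hg.comp Primrec.snd)
      (hd.comp Primrec.fst)

theorem recursiveIn_minIndex {φ : ℕ → ℕ →. ℕ} (hφ : Numbering' φ) (hcb : ComputablyBounded φ)
    {b t : ℕ → ℕ} (hb : Computable b) (htb : ∀ d, t d ≤ b d)
    (ht : ∀ d, φ (t d) = stdNumbering d) :
    RecursiveIn' (chi (MINset φ)) fun d => Part.some (minIndex φ (t d)) := by
  obtain ⟨g, hg, hgφ⟩ := hφ.exists_primrec_translation
  -- the search runs over `n = ⟨s, j⟩` on inputs `a = ⟨d, encode σ⟩`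
  let survivorTest : ℕ → List Bool → Bool := fun m κ =>
    soleSurvivor g m.unpair.1.unpair.1 ((decode (α := List Bool) m.unpair.1.unpair.2).getD []) κ
      m.unpair.2.unpair.1 m.unpair.2.unpair.2
  have hu₁ : Primrec fun m : ℕ => m.unpair.1 := Primrec.fst.comp Primrec.unpair
  have hu₂ : Primrec fun m : ℕ => m.unpair.2 := Primrec.snd.comp Primrec.unpair
  have htest : Computable₂ survivorTest :=
    (Primrec.soleSurvivor hg (hu₁.comp (hu₁.comp Primrec.fst))
      (Primrec.option_getD.comp (Primrec.decode.comp (hu₂.comp (hu₁.comp Primrec.fst)))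
        (.const [])) Primrec.snd
      (hu₁.comp (hu₂.comp Primrec.fst)) (hu₂.comp (hu₂.comp Primrec.fst))).to_comp
  have hsearch := ((RecursiveIn'.rfind_charPrefix .oracle htest
    (hu₁.comp hu₂).to_comp).map hu₂.to_comp).trans (haltingPairs_turingLE_MINset hφ hcb)
  refine (RecursiveIn'.comp_charPrefix .oracle hsearch (Computable.succ.comp hb)).of_eq
    fun d => Nat.rfind_map_eq_some ?_ fun n hn => ?_
  · obtain ⟨s, hs⟩ := exists_soleSurvivor (b := b d) hgφ (ht d)
    exact ⟨Nat.pair s (minIndex φ (t d)), by simpa [survivorTest, encodek] using hs⟩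
  · exact eq_minIndex_of_soleSurvivor hgφ (ht d) (htb d) (by simpa [survivorTest, encodek] using hn)

theorem eqSet_turingLE_MINset {φ : ℕ → ℕ →. ℕ} (hφ : Numbering' φ) (hcb : ComputablyBounded φ) :
    TuringLE eqSet (MINset φ) := by
  obtain ⟨b, hb, hbstd⟩ := hcb stdNumbering numbering_stdNumbering
  choose t htb ht using hbstd
  have hmin := recursiveIn_minIndex hφ hcb hb htb ht
  have hcompare : Computable fun p : ℕ => bif p.unpair.1 == p.unpair.2 then 1 else 0 :=
    (Primrec.cond (Primrec.beq.comp (Primrec.fst.comp Primrec.unpair)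
      (Primrec.snd.comp Primrec.unpair)) (.const 1) (.const 0)).to_comp
  refine (RecursiveIn'.comp (.of_computable hcompare) (.pair
    (hmin.comp_computable (Computable.fst.comp Computable.unpair))
    (hmin.comp_computable (Computable.snd.comp Computable.unpair)))).of_eq fun w => ?_
  rw [chi_eq_cond (A := eqSet) (b := minIndex φ (t w.unpair.1) == minIndex φ (t w.unpair.2))]
  · simp [Seq.seq, Part.bind_eq_bind]
  · rw [beq_iff_eq, minIndex_eq_minIndex_iff, ht, ht]
    rfl

/-- For every computably bounded numbering, `MIN_φ` is Turing equivalent to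
the set `{⟨d,e⟩ : ψ_d = ψ_e}` (hence to the double jump of the empty set). -/
theorem MIN_turing_equiv_eqSet
    (φ : ℕ → ℕ →. ℕ) (hφ : Numbering' φ) (hcb : ComputablyBounded φ) :
    TuringLE (MINset φ) eqSet ∧ TuringLE eqSet (MINset φ) :=
  ⟨MINset_turingLE_eqSet hφ, eqSet_turingLE_MINset hφ hcb⟩
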